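/- arXiv:1610.01396 — 5 statements merged into one kernel-verified Lean document; each statement's English description precedes it below -/
import Mathlib

section
/- Let V be a 2-dimensional real vector space with a symmetric bilinear form ⟨·,·⟩ and a basis {e₁,e₂} satisfying ⟨e₁,e₁⟩ = ⟨e₂,e₂⟩ = 0 and ⟨e₁,e₂⟩ = 1 (a null frame). If h is a symmetric bilinear map from V×V to a vector space W with a symmetric bilinear form, such that h(e₁,e₂) = 0, h(e₁,e₁) = λ·f₂, h(e₂,e₂) = μ·f₁ where f₁,f₂ ∈ W satisfy ⟨f₁,f₁⟩ = ⟨f₂,f₂⟩ = 0, ⟨f₁,f₂⟩ = 1, then for every v ∈ V, ⟨h(v,v),h(v,v)⟩ = (λμ/2)·⟨v,v⟩². -/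
/-! Write `v = a e₁ + c e₂`. Then `⟨v,v⟩ = 2ac`, and since `h(e₁,e₂) = 0`,
`h(v,v) = a²λ f₂ + c²μ f₁`, whose square is `2a²c²λμ = (λμ/2)(2ac)²`. -/

theorem LinearMap.apply_smul_add_smul_self_of_symm {R M N : Type*} [CommSemiring R]
    [AddCommMonoid M] [Module R M] [AddCommMonoid N] [Module R N]
    (B : M →ₗ[R] M →ₗ[R] N) (hB : ∀ x y, B x y = B y x) (a c : R) (x y : M) :
    B (a • x + c • y) (a • x + c • y) =
      (a ^ 2) • B x x + (2 * a * c) • B x y + (c ^ 2) • B y y := by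
  simp only [map_add, map_smul, LinearMap.add_apply, LinearMap.smul_apply, hB y x]
  module

theorem Module.Basis.eq_repr_zero_smul_add_repr_one_smul {R M : Type*} [Semiring R]
    [AddCommMonoid M] [Module R M] (b : Module.Basis (Fin 2) R M) (v : M) :
    v = b.repr v 0 • b 0 + b.repr v 1 • b 1 := by
  simpa only [Fin.sum_univ_two] using (b.sum_repr v).symm

/-- Minimal (h(e₁,e₂)=0) Lagrangian-type second fundamental form in a null frame
is pseudo-isotropic with λ̃ = λμ/2. -/
theorem stmt_0 (V W : Type*) [AddCommGroup V] [Module ℝ V]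
    [AddCommGroup W] [Module ℝ W]
    (gV : V →ₗ[ℝ] V →ₗ[ℝ] ℝ) (gW : W →ₗ[ℝ] W →ₗ[ℝ] ℝ)
    (hgV : ∀ x y, gV x y = gV y x) (hgW : ∀ x y, gW x y = gW y x)
    (b : Module.Basis (Fin 2) ℝ V) (e₁ e₂ : V) (he₁ : e₁ = b 0) (he₂ : e₂ = b 1)
    (h11 : gV e₁ e₁ = 0) (h22 : gV e₂ e₂ = 0) (h12 : gV e₁ e₂ = 1)
    (h : V →ₗ[ℝ] V →ₗ[ℝ] W) (hsymm : ∀ x y, h x y = h y x)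
    (f₁ f₂ : W) (hf1 : gW f₁ f₁ = 0) (hf2 : gW f₂ f₂ = 0) (hf12 : gW f₁ f₂ = 1)
    (lam mu : ℝ)
    (hmin : h e₁ e₂ = 0) (hh11 : h e₁ e₁ = lam • f₂) (hh22 : h e₂ e₂ = mu • f₁) :
    ∀ v : V, gW (h v v) (h v v) = (lam * mu / 2) * (gV v v) ^ 2 := by
  intro v
  obtain ⟨a, c, rfl⟩ : ∃ a c : ℝ, v = a • e₁ + c • e₂ :=
    ⟨_, _, he₁ ▸ he₂ ▸ b.eq_repr_zero_smul_add_repr_one_smul v⟩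
  have hgv : gV (a • e₁ + c • e₂) (a • e₁ + c • e₂) = 2 * a * c := by
    rw [gV.apply_smul_add_smul_self_of_symm hgV, h11, h22, h12]
    simp only [smul_eq_mul]
    ring
  have hhv :
      h (a • e₁ + c • e₂) (a • e₁ + c • e₂) = (c ^ 2 * mu) • f₁ + (a ^ 2 * lam) • f₂ := by
    rw [h.apply_smul_add_smul_self_of_symm hsymm, hmin, hh11, hh22]
    module
  rw [hgv, hhv, gW.apply_smul_add_smul_self_of_symm hgW, hf1, hf2, hf12]
  simp only [smul_eq_mul]
  ring
end

section
/- Let V be a finite-dimensional real vector space with a nondegenerate symmetric bilinear form g, W a real vector space with a symmetric bilinear form G, h : V × V → W a symmetric bilinear map, and λ̃ ∈ ℝ. If G(h(v,v),h(v,v)) = λ̃·g(v,v)² for all v ∈ V, then for all x,y,z,w ∈ V: G(h(x,y),h(z,w)) + G(h(y,z),h(x,w)) + G(h(z,x),h(y,w)) = λ̃·(g(x,y)g(z,w) + g(y,z)g(x,w) + g(z,x)g(y,w)). -/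
/-- Polarization direction of the characterization of pseudo-isotropy: the diagonal
condition polarizes to the fully symmetrized four-variable identity. -/
theorem stmt_2 (V W : Type*) [AddCommGroup V] [Module ℝ V] [FiniteDimensional ℝ V]
    [AddCommGroup W] [Module ℝ W]
    (g : V →ₗ[ℝ] V →ₗ[ℝ] ℝ) (G : W →ₗ[ℝ] W →ₗ[ℝ] ℝ)
    (hgsymm : ∀ x y, g x y = g y x) (hGsymm : ∀ x y, G x y = G y x)
    (hgnd : ∀ x : V, (∀ y : V, g x y = 0) → x = 0)
    (h : V →ₗ[ℝ] V →ₗ[ℝ] W) (hsymm : ∀ x y, h x y = h y x)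
    (lam : ℝ)
    (hdiag : ∀ v : V, G (h v v) (h v v) = lam * (g v v) ^ 2) :
    ∀ x y z w : V,
      G (h x y) (h z w) + G (h y z) (h x w) + G (h z x) (h y w) =
        lam * (g x y * g z w + g y z * g x w + g z x * g y w) := by
  have E : ∀ a b : V, 2 * G (h a b) (h a b) + G (h a a) (h b b) =
      lam * (g a a * g b b + 2 * (g a b) ^ 2) := by
    intro a b
    have h1 := hdiag (a + b)
    have h2 := hdiag (a - b)
    simp only [map_add, map_sub, LinearMap.add_apply, LinearMap.sub_apply] at h1 h2
    simp only [hsymm b a, hgsymm b a, hGsymm (h b b) (h a a), hGsymm (h a b) (h a a),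
      hGsymm (h b b) (h a b)] at h1 h2
    linear_combination (h1 + h2 - 2 * hdiag a - 2 * hdiag b) / 4
  have F : ∀ a c d : V, 2 * G (h a c) (h a d) + G (h a a) (h c d) =
      lam * (g a a * g c d + 2 * g a c * g a d) := by
    intro a c d
    have e1 := E a (c + d)
    simp only [map_add, LinearMap.add_apply] at e1
    simp only [hsymm d c, hgsymm d c, hGsymm (h a d) (h a c),
      hGsymm (h d d) (h c c)] at e1
    linear_combination (e1 - E a c - E a d) / 2
  intro x y z w
  rw [hsymm z x, hgsymm z x]
  have f1 := F (x + y) z w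
  simp only [map_add, LinearMap.add_apply] at f1
  simp only [hsymm y x, hgsymm y x, hGsymm (h y z) (h x z), hGsymm (h y w) (h x w),
    hGsymm (h x w) (h y z)] at f1
  linear_combination (f1 - F x z w - F y z w) / 2
end

section
/- With notation as in the Type 1 structure equations: suppose λ, α, β are smooth real functions on a 2-manifold with frame vector fields E₁, E₂ satisfying E₁(λ) = -αλ, E₂(λ) = 0, [E₁,E₂] = ∇_{E₁}E₂ - ∇_{E₂}E₁ = -αE₂ + βE₁ with β = 0, and λ is nowhere zero. Then E₂(α) = 0. -/
theorem Pi.eq_zero_of_mul_eq_zero_of_forall_ne_zero {ι R : Type*} [MulZeroClass R]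
    [NoZeroDivisors R] {f g : ι → R} (h : f * g = 0) (hg : ∀ i, g i ≠ 0) : f = 0 :=
  funext fun i => (mul_eq_zero.1 (congrFun h i)).resolve_right (hg i)

theorem map_mul_of_leibniz_of_map_eq_zero {A : Type*} [NonUnitalNonAssocSemiring A]
    (D : A → A) (hD : ∀ f g : A, D (f * g) = D f * g + f * D g) (f : A) {g : A}
    (hg : D g = 0) : D (f * g) = D f * g := by
  rw [hD, hg, mul_zero, add_zero]

theorem stmt_5_general (M : Type*)
    (E₁ E₂ : (M → ℝ) →ₗ[ℝ] (M → ℝ))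
    (hE₂Leib : ∀ f g : M → ℝ, E₂ (f * g) = E₂ f * g + f * E₂ g)
    (α lam : M → ℝ)
    (hlam1 : E₁ lam = -(α * lam))
    (hlam2 : E₂ lam = 0)
    (hbracket : ∀ f : M → ℝ, E₁ (E₂ f) - E₂ (E₁ f) = -(α * E₂ f))
    (hlamne : ∀ p : M, lam p ≠ 0) :
    E₂ α = 0 := by
  have hcomm : E₂ (E₁ lam) = 0 := by simpa [hlam2] using hbracket lam
  have hmul : E₂ α * lam = 0 := by
    rwa [← map_mul_of_leibniz_of_map_eq_zero E₂ hE₂Leib α hlam2, ← neg_eq_zero, ← map_neg,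
      ← hlam1]
  exact Pi.eq_zero_of_mul_eq_zero_of_forall_ne_zero hmul hlamne

/-- Lemma 5.2 (first part), Type 1: with E₁(λ) = -αλ, E₂(λ) = 0, β = 0 and
[E₁,E₂] = -αE₂, and λ nowhere zero, one gets E₂(α) = 0.  Vector fields are
modeled as derivations on real-valued functions. -/
theorem stmt_5 (M : Type*)
    (E₁ E₂ : (M → ℝ) →ₗ[ℝ] (M → ℝ))
    (hE₁Leib : ∀ f g : M → ℝ, E₁ (f * g) = E₁ f * g + f * E₁ g)
    (hE₂Leib : ∀ f g : M → ℝ, E₂ (f * g) = E₂ f * g + f * E₂ g)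
    (α lam : M → ℝ)
    (hlam1 : E₁ lam = -(α * lam))
    (hlam2 : E₂ lam = 0)
    (hbracket : ∀ f : M → ℝ, E₁ (E₂ f) - E₂ (E₁ f) = -(α * E₂ f))
    (hlamne : ∀ p : M, lam p ≠ 0) :
    E₂ α = 0 :=
  stmt_5_general M E₁ E₂ hE₂Leib α lam hlam1 hlam2 hbracket hlamne
end

section
/- Let f : ℝ² → ℂ² be a smooth map satisfying the PDE system f_vv = i f_v, f_uv = i f_u, f_uu = λ(u)³ i f_v for a smooth function λ of u alone. Then there exist a ℂ²-valued function A₁ of u and a constant A₂ ∈ ℂ² such that f(u,v) = A₁(u)e^{iv} + A₂, and A₁ satisfies A₁'' = -λ³ A₁. -/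
open Complex

lemma expI_hasDerivAt (a : ℂ) (v : ℝ) :
    HasDerivAt (fun t : ℝ => Complex.exp (a * t)) (a * Complex.exp (a * v)) v := by
  have h : HasDerivAt (fun z : ℂ => Complex.exp (a * z)) (Complex.exp (a * v) * (a * 1)) (v : ℂ) :=
    ((hasDerivAt_id (v : ℂ)).const_mul a).cexp
  have := h.comp_ofReal
  simpa [mul_comm] using this

lemma ode_exp (g : ℝ → ℂ × ℂ) (hg : Differentiable ℝ g)
    (h : ∀ v, deriv g v = Complex.I • g v) (v : ℝ) :
    g v = Complex.exp (Complex.I * v) • g 0 := by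
  have hd : ∀ w, HasDerivAt (fun t : ℝ => Complex.exp (-Complex.I * t) • g t) 0 w := by
    intro w
    have hgv : HasDerivAt g (Complex.I • g w) w := by
      have := (hg w).hasDerivAt; rwa [h w] at this
    have he := expI_hasDerivAt (-Complex.I) w
    have := he.smul hgv
    refine this.congr_deriv ?_
    rw [smul_smul, ← add_smul]
    have : Complex.exp (-Complex.I * w) * Complex.I +
        -Complex.I * Complex.exp (-Complex.I * w) = 0 := by ring
    rw [this, zero_smul]
  have hc := is_const_of_deriv_eq_zero (fun w => (hd w).differentiableAt)
    (fun w => (hd w).deriv) v 0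
  simp only [Complex.ofReal_zero, mul_zero, Complex.exp_zero, one_smul] at hc
  have : Complex.exp (Complex.I * v) • (Complex.exp (-Complex.I * v) • g v)
      = Complex.exp (Complex.I * v) • g 0 := by rw [hc]
  rwa [smul_smul, ← Complex.exp_add, show Complex.I * v + -Complex.I * v = 0 by ring,
    Complex.exp_zero, one_smul] at this

open Complex in
/-- Integration step of Theorem 5.4 (Type 1 in ℂ²₁): the PDE system
f_vv = i f_v, f_uv = i f_u, f_uu = λ(u)³ i f_v separates as
f(u,v) = A₁(u)e^{iv} + A₂ with A₁'' = -λ³A₁. -/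
theorem stmt_6 (f : ℝ → ℝ → ℂ × ℂ) (lam : ℝ → ℝ)
    (hf : ContDiff ℝ (⊤ : ℕ∞) (fun p : ℝ × ℝ => f p.1 p.2))
    (hlam : ContDiff ℝ (⊤ : ℕ∞) lam)
    (fu fv : ℝ → ℝ → ℂ × ℂ)
    (hfu : ∀ u v, fu u v = deriv (fun t => f t v) u)
    (hfv : ∀ u v, fv u v = deriv (fun t => f u t) v)
    (hvv : ∀ u v, deriv (fun t => fv u t) v = Complex.I • fv u v)
    (huv : ∀ u v, deriv (fun t => fu u t) v = Complex.I • fu u v)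
    (huu : ∀ u v, deriv (fun t => fu t v) u = (lam u) ^ 3 • (Complex.I • fv u v)) :
    ∃ (A₁ : ℝ → ℂ × ℂ) (A₂ : ℂ × ℂ),
      (∀ u v, f u v = Complex.exp (Complex.I * (v : ℂ)) • A₁ u + A₂) ∧
      (∀ u, deriv (deriv A₁) u = -((lam u) ^ 3) • A₁ u) := by
  set g : ℝ × ℝ → ℂ × ℂ := fun p => f p.1 p.2 with hgdef
  have hgdiff : Differentiable ℝ g := hf.differentiable (by simp)
  -- partial derivatives as fderiv applications
  have hfv_fd : ∀ u v, fv u v = fderiv ℝ g (u, v) (0, 1) := by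
    intro u v
    have h1 : HasDerivAt (fun t : ℝ => ((u : ℝ), t)) ((0 : ℝ), (1 : ℝ)) v :=
      (hasDerivAt_const v u).prodMk (hasDerivAt_id v)
    have h2 := (hgdiff (u, v)).hasFDerivAt.comp_hasDerivAt v h1
    rw [hfv]
    have := h2.deriv
    simpa [Function.comp_def, hgdef] using this
  have hfu_fd : ∀ u v, fu u v = fderiv ℝ g (u, v) (1, 0) := by
    intro u v
    have h1 : HasDerivAt (fun t : ℝ => (t, (v : ℝ))) ((1 : ℝ), (0 : ℝ)) u :=
      (hasDerivAt_id u).prodMk (hasDerivAt_const u v)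
    have h2 := (hgdiff (u, v)).hasFDerivAt.comp_hasDerivAt u h1
    rw [hfu]
    have := h2.deriv
    simpa [Function.comp_def, hgdef] using this
  have hsm1 : ContDiff ℝ (⊤ : ℕ∞) (fun p : ℝ × ℝ => fderiv ℝ g p (0, 1)) :=
    (hf.fderiv_right (by simp)).clm_apply contDiff_const
  have hsm2 : ContDiff ℝ (⊤ : ℕ∞) (fun p : ℝ × ℝ => fderiv ℝ g p (1, 0)) :=
    (hf.fderiv_right (by simp)).clm_apply contDiff_const
  have hfv_diffv : ∀ u, Differentiable ℝ (fun v => fv u v) := by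
    intro u
    have : (fun v => fv u v) = fun v => fderiv ℝ g (u, v) (0, 1) :=
      funext fun v => hfv_fd u v
    rw [this]
    exact (hsm1.differentiable (by simp)).comp ((differentiable_const u).prodMk differentiable_id)
  have hfu_diffv : ∀ u, Differentiable ℝ (fun v => fu u v) := by
    intro u
    have : (fun v => fu u v) = fun v => fderiv ℝ g (u, v) (1, 0) :=
      funext fun v => hfu_fd u v
    rw [this]
    exact (hsm2.differentiable (by simp)).comp ((differentiable_const u).prodMk differentiable_id)
  have hfud : ∀ u, Differentiable ℝ (fun t => f u t) := fun u =>
    hgdiff.comp ((differentiable_const u).prodMk differentiable_id)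
  have hfud' : ∀ v, Differentiable ℝ (fun t => f t v) := fun v =>
    hgdiff.comp (differentiable_id.prodMk (differentiable_const v))
  -- ODE in v for fv and fu
  have hfv_rep : ∀ u v, fv u v = Complex.exp (Complex.I * v) • fv u 0 := fun u v =>
    ode_exp _ (hfv_diffv u) (fun w => hvv u w) v
  have hfu_rep : ∀ u v, fu u v = Complex.exp (Complex.I * v) • fu u 0 := fun u v =>
    ode_exp _ (hfu_diffv u) (fun w => huv u w) v
  -- representation of f
  set B : ℝ → ℂ × ℂ := fun u => -Complex.I • fv u 0 with hBdef
  have key : ∀ u v, f u v = Complex.exp (Complex.I * v) • B u + (f u 0 - B u) := by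
    intro u v
    have hd : ∀ w : ℝ, HasDerivAt
        (fun t : ℝ => f u t - Complex.exp (Complex.I * t) • B u) 0 w := by
      intro w
      have hF1 : HasDerivAt (fun t => f u t) (fv u w) w := by
        have := ((hfud u) w).hasDerivAt
        rwa [← hfv] at this
      have hF2 : HasDerivAt (fun t : ℝ => Complex.exp (Complex.I * t) • B u)
          ((Complex.I * Complex.exp (Complex.I * w)) • B u) w :=
        (expI_hasDerivAt Complex.I w).smul_const (B u)
      have := hF1.sub hF2
      refine this.congr_deriv ?_
      rw [hfv_rep u w, hBdef]
      simp only [smul_smul]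
      have hs : Complex.I * Complex.exp (Complex.I * w) * -Complex.I
          = Complex.exp (Complex.I * w) := by
        have h1 : Complex.I * Complex.exp (Complex.I * w) * -Complex.I
            = -(Complex.I * Complex.I) * Complex.exp (Complex.I * w) := by ring
        rw [h1, Complex.I_mul_I]; ring
      rw [hs, sub_self]
    have hc := is_const_of_deriv_eq_zero (fun w => (hd w).differentiableAt)
      (fun w => (hd w).deriv) v 0
    simp only [Complex.ofReal_zero, mul_zero, Complex.exp_zero, one_smul] at hc
    have : f u v = Complex.exp (Complex.I * v) • B u + (f u v - Complex.exp (Complex.I * v) • B u) := by abel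
    rw [this, hc]
  -- B is given by a smooth formula
  set A1 : ℝ → ℂ × ℂ := fun u => (2 : ℂ)⁻¹ • (f u 0 - f u Real.pi) with hA1def
  have hBA1 : ∀ u, B u = A1 u := by
    intro u
    have h1 := key u Real.pi
    rw [show Complex.I * (Real.pi : ℂ) = (Real.pi : ℂ) * Complex.I from mul_comm _ _,
      Complex.exp_pi_mul_I, neg_one_smul] at h1
    have hA1u : A1 u = (2:ℂ)⁻¹ • (f u 0 - f u Real.pi) := rfl
    rw [hA1u, h1]
    match_scalars <;> ring
  have key2 : ∀ u v, f u v = Complex.exp (Complex.I * v) • A1 u + (f u 0 - A1 u) := by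
    intro u v
    rw [← hBA1 u]
    exact key u v
  have hA1diff : Differentiable ℝ A1 := by
    rw [hA1def]
    exact (((hfud' 0).sub (hfud' Real.pi)).const_smul (2:ℂ)⁻¹)
  set C : ℝ → ℂ × ℂ := fun u => f u 0 - A1 u with hCdef
  have hCdiff : Differentiable ℝ C := (hfud' 0).sub hA1diff
  -- derivatives in u
  have hderiv_eq : ∀ u v, fu u v
      = Complex.exp (Complex.I * v) • deriv A1 u + deriv C u := by
    intro u v
    have lhs : HasDerivAt (fun t => f t v) (fu u v) u := by
      have := ((hfud' v) u).hasDerivAt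
      rwa [← hfu] at this
    have rhs : HasDerivAt (fun t => Complex.exp (Complex.I * v) • A1 t + C t)
        (Complex.exp (Complex.I * v) • deriv A1 u + deriv C u) u :=
      (((hA1diff u).hasDerivAt).const_smul (Complex.exp (Complex.I * v))).add ((hCdiff u).hasDerivAt)
    have heq : (fun t => f t v) = fun t => Complex.exp (Complex.I * v) • A1 t + C t :=
      funext fun t => key2 t v
    rw [heq] at lhs
    exact lhs.unique rhs
  have e1 : ∀ u, fu u 0 = deriv A1 u + deriv C u := by
    intro u
    have := hderiv_eq u 0
    simpa using this
  have e2 : ∀ u, -fu u 0 = -deriv A1 u + deriv C u := by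
    intro u
    have h := hderiv_eq u Real.pi
    rw [show Complex.I * (Real.pi : ℂ) = (Real.pi : ℂ) * Complex.I from mul_comm _ _,
      Complex.exp_pi_mul_I, neg_one_smul] at h
    have h2 := hfu_rep u Real.pi
    rw [show Complex.I * (Real.pi : ℂ) = (Real.pi : ℂ) * Complex.I from mul_comm _ _,
      Complex.exp_pi_mul_I, neg_one_smul] at h2
    rw [← h2, ← h]
  have hdC : ∀ u, deriv C u = 0 := by
    intro u
    have h := e1 u
    have h' := e2 u
    have : fu u 0 + -fu u 0 = (deriv A1 u + deriv C u) + (-deriv A1 u + deriv C u) := by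
      rw [← h, ← h']
    have h2 : (0 : ℂ × ℂ) = deriv C u + deriv C u := by
      rw [← add_neg_cancel (fu u 0), this]; abel
    have h3 : ((2:ℂ))⁻¹ • (deriv C u + deriv C u) = deriv C u := by
      match_scalars <;> ring
    rw [← h3, ← h2, smul_zero]
  have hdA1 : ∀ u, deriv A1 u = fu u 0 := by
    intro u
    have := e1 u
    rw [hdC u, add_zero] at this
    exact this.symm
  have hCconst : ∀ u, C u = C 0 := fun u =>
    is_const_of_deriv_eq_zero hCdiff hdC u 0
  refine ⟨A1, C 0, ?_, ?_⟩
  · intro u v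
    rw [key2 u v, show f u 0 - A1 u = C u from rfl, hCconst u]
  · intro u
    have hA1' : deriv A1 = fun t => fu t 0 := funext fun t => hdA1 t
    rw [hA1', huu u 0]
    have hfv0 : fv u 0 = Complex.I • A1 u := by
      have := hBA1 u
      rw [hBdef] at this
      rw [← this, smul_smul,
        show Complex.I * -Complex.I = -(Complex.I * Complex.I) from by ring,
        Complex.I_mul_I]
      simp
    rw [hfv0, smul_smul, Complex.I_mul_I, neg_one_smul, smul_neg, neg_smul]
end

section
/- Let r > 0 and A₁, A₂ ∈ ℂ². Define f(u,v) = (A₁e^{rv} + A₂e^{-rv})e^{iu} + (A₁e^{rv} - A₂e^{-rv}). Then f satisfies f_uu = i f_u, f_uv = -r e^{-iu} f_u + i f_v, and f_vv = r e^{-iu} f_v + i r²(e^{-2iu} - 1) f_u. -/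
/-!
Write `f u v = e^{iu} • E v + F v` with `E = e^{rv} A₁ + e^{-rv} A₂` and `F = e^{rv} A₁ - e^{-rv} A₂`.
Since `E' = r F` and `F' = r E`, all first and second partial derivatives of `f` are explicit:
`f_u = i e^{iu} E`, `f_v = r (e^{iu} F + E)`, and the three structure equations become identities
between combinations of `E v` and `F v` with coefficients in `e^{±iu}`.
-/

open Complex

lemma hasDerivAt_cexp_mul_ofReal (c : ℂ) (x : ℝ) :
    HasDerivAt (fun t : ℝ => cexp (c * t)) (c * cexp (c * x)) x := by
  simpa [mul_comm] using (((hasDerivAt_id (x : ℂ)).const_mul c).cexp).comp_ofReal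

section

variable {M : Type*} [NormedAddCommGroup M] [NormedSpace ℂ M]

lemma hasDerivAt_cexp_smul_add_cexp_neg_smul (c : ℂ) (A₁ A₂ : M) (x : ℝ) :
    HasDerivAt (fun t : ℝ => cexp (c * t) • A₁ + cexp (-(c * t)) • A₂)
      (c • (cexp (c * x) • A₁ - cexp (-(c * x)) • A₂)) x := by
  have h := ((hasDerivAt_cexp_mul_ofReal c x).smul_const A₁).add
    ((hasDerivAt_cexp_mul_ofReal (-c) x).smul_const A₂)
  simp only [neg_mul] at h
  exact h.congr_deriv (by module)

lemma hasDerivAt_cexp_smul_sub_cexp_neg_smul (c : ℂ) (A₁ A₂ : M) (x : ℝ) :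
    HasDerivAt (fun t : ℝ => cexp (c * t) • A₁ - cexp (-(c * t)) • A₂)
      (c • (cexp (c * x) • A₁ + cexp (-(c * x)) • A₂)) x := by
  have h := ((hasDerivAt_cexp_mul_ofReal c x).smul_const A₁).sub
    ((hasDerivAt_cexp_mul_ofReal (-c) x).smul_const A₂)
  simp only [neg_mul] at h
  exact h.congr_deriv (by module)

lemma smul_mixed_partial_identity {z : ℂ} (hz : z ≠ 0) (r : ℂ) (E F : M) :
    (I * z) • r • F = -(r * z⁻¹) • (I * z) • E + I • r • (z • F + E) := by
  match_scalars
  · field_simp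
  · field_simp; ring

lemma smul_second_partial_identity {z : ℂ} (hz : z ≠ 0) (r : ℂ) (E F : M) :
    r • (z • r • E + r • F) =
      (r * z⁻¹) • r • (z • F + E) + (I * r ^ 2 * (z⁻¹ ^ 2 - 1)) • (I * z) • E := by
  match_scalars
  · field_simp; linear_combination (z ^ 2 - 1) * r ^ 2 * I_sq
  · field_simp

end

theorem stmt_11_general (r : ℝ) (A₁ A₂ : ℂ × ℂ)
    (f : ℝ → ℝ → ℂ × ℂ)
    (hf : ∀ u v, f u v =
      Complex.exp (Complex.I * (u : ℂ)) •
        (Complex.exp ((r : ℂ) * (v : ℂ)) • A₁ + Complex.exp (-((r : ℂ) * (v : ℂ))) • A₂) +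
      (Complex.exp ((r : ℂ) * (v : ℂ)) • A₁ - Complex.exp (-((r : ℂ) * (v : ℂ))) • A₂))
    (fu fv : ℝ → ℝ → ℂ × ℂ)
    (hfu : ∀ u v, fu u v = deriv (fun t => f t v) u)
    (hfv : ∀ u v, fv u v = deriv (fun t => f u t) v) :
    (∀ u v, deriv (fun t => fu t v) u = Complex.I • fu u v) ∧
    (∀ u v, deriv (fun t => fu u t) v =
      -((r : ℂ) * Complex.exp (-(Complex.I * (u : ℂ)))) • fu u v + Complex.I • fv u v) ∧
    (∀ u v, deriv (fun t => fv u t) v =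
      ((r : ℂ) * Complex.exp (-(Complex.I * (u : ℂ)))) • fv u v +
        (Complex.I * (r : ℂ) ^ 2 * (Complex.exp (-(2 * Complex.I * (u : ℂ))) - 1)) • fu u v) := by
  set E : ℝ → ℂ × ℂ := fun t => cexp (r * t) • A₁ + cexp (-(r * t)) • A₂
  set F : ℝ → ℂ × ℂ := fun t => cexp (r * t) • A₁ - cexp (-(r * t)) • A₂
  have hE (v : ℝ) : HasDerivAt E ((r : ℂ) • F v) v :=
    hasDerivAt_cexp_smul_add_cexp_neg_smul (r : ℂ) A₁ A₂ v
  have hF (v : ℝ) : HasDerivAt F ((r : ℂ) • E v) v :=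
    hasDerivAt_cexp_smul_sub_cexp_neg_smul (r : ℂ) A₁ A₂ v
  have hfu' (u v : ℝ) : fu u v = (I * cexp (I * u)) • E v := by
    rw [hfu, show (fun t => f t v) = fun t : ℝ => cexp (I * t) • E v + F v from funext (hf · v)]
    exact (((hasDerivAt_cexp_mul_ofReal I u).smul_const (E v)).add_const (F v)).deriv
  have hfv' (u v : ℝ) : fv u v = (r : ℂ) • (cexp (I * u) • F v + E v) := by
    rw [hfv, show (fun t => f u t) = fun t : ℝ => cexp (I * u) • E t + F t from funext (hf u)]
    exact ((((hE v).const_smul (cexp (I * u))).add (hF v)).congr_deriv (by module)).deriv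
  have hexp_neg (u : ℝ) : cexp (-(I * u)) = (cexp (I * u))⁻¹ := Complex.exp_neg _
  have hexp_neg_two (u : ℝ) : cexp (-(2 * I * u)) = (cexp (I * u))⁻¹ ^ 2 := by
    rw [← hexp_neg, ← Complex.exp_nat_mul]
    push_cast
    ring_nf
  refine ⟨fun u v => ?_, fun u v => ?_, fun u v => ?_⟩
  · have h : HasDerivAt (fun t => fu t v) ((I * (I * cexp (I * u))) • E v) u := by
      simp only [hfu']
      exact ((hasDerivAt_cexp_mul_ofReal I u).const_mul I).smul_const (E v)
    rw [h.deriv, hfu', smul_smul]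
  · have h : HasDerivAt (fun t => fu u t) ((I * cexp (I * u)) • (r : ℂ) • F v) v := by
      simp only [hfu']
      exact (hE v).const_smul (I * cexp (I * u))
    rw [h.deriv, hfu', hfv', hexp_neg]
    exact smul_mixed_partial_identity (exp_ne_zero _) _ _ _
  · have h : HasDerivAt (fun t => fv u t)
        ((r : ℂ) • (cexp (I * u) • (r : ℂ) • E v + (r : ℂ) • F v)) v := by
      simp only [hfv']
      exact (((hF v).const_smul (cexp (I * u))).add (hE v)).const_smul (r : ℂ)
    rw [h.deriv, hfu', hfv', hexp_neg, hexp_neg_two]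
    exact smul_second_partial_identity (exp_ne_zero _) _ _ _

/-- Verification for Theorem 6.5 (2): f(u,v) = (A₁e^{rv}+A₂e^{-rv})e^{iu} +
(A₁e^{rv}-A₂e^{-rv}) solves the Type 2 structure equations with parameter r. -/
theorem stmt_11 (r : ℝ) (hr : 0 < r) (A₁ A₂ : ℂ × ℂ)
    (f : ℝ → ℝ → ℂ × ℂ)
    (hf : ∀ u v, f u v =
      Complex.exp (Complex.I * (u : ℂ)) •
        (Complex.exp ((r : ℂ) * (v : ℂ)) • A₁ + Complex.exp (-((r : ℂ) * (v : ℂ))) • A₂) +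
      (Complex.exp ((r : ℂ) * (v : ℂ)) • A₁ - Complex.exp (-((r : ℂ) * (v : ℂ))) • A₂))
    (fu fv : ℝ → ℝ → ℂ × ℂ)
    (hfu : ∀ u v, fu u v = deriv (fun t => f t v) u)
    (hfv : ∀ u v, fv u v = deriv (fun t => f u t) v) :
    (∀ u v, deriv (fun t => fu t v) u = Complex.I • fu u v) ∧
    (∀ u v, deriv (fun t => fu u t) v =
      -((r : ℂ) * Complex.exp (-(Complex.I * (u : ℂ)))) • fu u v + Complex.I • fv u v) ∧
    (∀ u v, deriv (fun t => fv u t) v =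
      ((r : ℂ) * Complex.exp (-(Complex.I * (u : ℂ)))) • fv u v +
        (Complex.I * (r : ℂ) ^ 2 * (Complex.exp (-(2 * Complex.I * (u : ℂ))) - 1)) • fu u v) :=
  stmt_11_general r A₁ A₂ f hf fu fv hfu hfv
end
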